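/- For all v, w ∈ ℤ × ℤ, the symmetrized elements of 𝒜 satisfy the product-to-sum formula (e_v + e_(−v)) * (e_w + e_(−w)) = A^(D v w) • (e_(v−w) + e_(−(v−w))) + A^(−D v w) • (e_(v+w) + e_(−(v+w))). (This is the paper's Proposition: the product of the symmetrizations of the oriented curve classes γ_(a,b) and γ_(c,d) in the oriented skein module equals A^(ad−bc) times the symmetrization of γ_(a−c,b−d) plus A^(−(ad−bc)) times the symmetrization of γ_(a+c,b+d).) -/

import Mathlib

open Finsupp LaurentPolynomial

noncomputable section

/-- `R = ℤ[A,A⁻¹]`, the ring of Laurent polynomials over `ℤ`; `A = LaurentPolynomial.T 1`. -/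
abbrev R := LaurentPolynomial ℤ

/-- The determinant pairing `D (a,b) (c,d) = a*d - b*c`. -/
def D (v w : ℤ × ℤ) : ℤ := v.1 * w.2 - v.2 * w.1

/-- The unique `R`-bilinear multiplication on the free `R`-module `(ℤ × ℤ) →₀ R` with
`e_v * e_w = A^(-(D v w)) • e_(v+w)` on basis vectors. -/
def mulF : ((ℤ × ℤ) →₀ R) →ₗ[R] ((ℤ × ℤ) →₀ R) →ₗ[R] ((ℤ × ℤ) →₀ R) :=
  Finsupp.lsum R fun v : ℤ × ℤ => LinearMap.toSpanSingleton R _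
    (Finsupp.lsum R fun w : ℤ × ℤ => LinearMap.toSpanSingleton R _
      (Finsupp.single (v + w) (T (-(D v w)))))

lemma mulF_single_single (v w : ℤ × ℤ) (r s : R) :
    mulF (Finsupp.single v r) (Finsupp.single w s) =
      Finsupp.single (v + w) (r * s * T (-(D v w))) := by
  rw [mulF, Finsupp.lsum_single, LinearMap.toSpanSingleton_apply, LinearMap.smul_apply,
    Finsupp.lsum_single, LinearMap.toSpanSingleton_apply, Finsupp.smul_single,
    Finsupp.smul_single, smul_eq_mul, smul_eq_mul, ← mul_assoc]

lemma mulF_assoc (x y z : (ℤ × ℤ) →₀ R) : mulF (mulF x y) z = mulF x (mulF y z) := by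
  induction x using Finsupp.induction_linear with
  | zero => simp only [map_zero, LinearMap.zero_apply]
  | add a b ha hb => simp only [map_add, LinearMap.add_apply, ha, hb]
  | single v r =>
    induction y using Finsupp.induction_linear with
    | zero => simp only [map_zero, LinearMap.zero_apply, LinearMap.map_zero]
    | add a b ha hb => simp only [map_add, LinearMap.add_apply, LinearMap.map_add, ha, hb]
    | single w s =>
      induction z using Finsupp.induction_linear with
      | zero => simp only [map_zero, LinearMap.map_zero]
      | add a b ha hb => simp only [map_add, LinearMap.map_add, ha, hb]
      | single u t =>
        rw [mulF_single_single, mulF_single_single, mulF_single_single,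
          mulF_single_single, add_assoc]
        congr 1
        have h : (T (-(D v w)) : R) * T (-(D (v + w) u)) =
            T (-(D w u)) * T (-(D v (w + u))) := by
          rw [← T_add, ← T_add]
          congr 1
          simp only [D, Prod.fst_add, Prod.snd_add]
          ring
        linear_combination (r * s * t) * h

lemma mulF_one_left (x : (ℤ × ℤ) →₀ R) :
    mulF (Finsupp.single (0 : ℤ × ℤ) (1 : R)) x = x := by
  induction x using Finsupp.induction_linear with
  | zero => simp only [LinearMap.map_zero]
  | add a b ha hb => simp only [LinearMap.map_add, ha, hb]
  | single w s =>
      rw [mulF_single_single]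
      have h : D (0 : ℤ × ℤ) w = 0 := by simp [D]
      rw [h, neg_zero, T_zero, mul_one, one_mul, zero_add]

lemma mulF_one_right (x : (ℤ × ℤ) →₀ R) :
    mulF x (Finsupp.single (0 : ℤ × ℤ) (1 : R)) = x := by
  induction x using Finsupp.induction_linear with
  | zero => simp only [map_zero, LinearMap.zero_apply]
  | add a b ha hb => simp only [map_add, LinearMap.add_apply, ha, hb]
  | single w s =>
      rw [mulF_single_single]
      have h : D w (0 : ℤ × ℤ) = 0 := by simp [D]
      rw [h, neg_zero, T_zero, mul_one, mul_one, add_zero]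

/-- The oriented skein module `𝒜` of the torus: the free `R`-module `(ℤ × ℤ) →₀ R`. -/
def 𝒜 : Type := (ℤ × ℤ) →₀ R

instance : AddCommGroup 𝒜 := inferInstanceAs (AddCommGroup ((ℤ × ℤ) →₀ R))
instance : Module R 𝒜 := inferInstanceAs (Module R ((ℤ × ℤ) →₀ R))

/-- `𝒜` as an associative unital ring, with the multiplication determined by
`e_v * e_w = A^(-(D v w)) • e_(v+w)`. -/
instance : Ring 𝒜 :=
  { (inferInstanceAs (AddCommGroup ((ℤ × ℤ) →₀ R)) : AddCommGroup 𝒜) with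
    mul := fun x y => mulF x y
    one := Finsupp.single (0 : ℤ × ℤ) (1 : R)
    mul_assoc := mulF_assoc
    one_mul := mulF_one_left
    mul_one := mulF_one_right
    left_distrib := fun a b c => LinearMap.map_add (mulF a) b c
    right_distrib := fun a b c => by
      show mulF (a + b) c = mulF a c + mulF b c
      exact LinearMap.congr_fun (map_add mulF a b) c
    zero_mul := fun a => by show mulF 0 a = 0; exact LinearMap.congr_fun (map_zero mulF) a
    mul_zero := fun a => by show mulF a 0 = 0; exact (mulF a).map_zero }

/-- `𝒜` as an `R`-algebra. -/
instance : Algebra R 𝒜 :=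
  Algebra.ofModule
    (fun r x y => by
      show mulF (r • x) y = r • mulF x y
      exact LinearMap.congr_fun (map_smul mulF r x) y)
    (fun r x y => by
      show mulF x (r • y) = r • mulF x y
      exact (mulF x).map_smul r y)

/-- The basis element `e_v` of `𝒜` (the oriented multicurve class `γ_v`). -/
def e (v : ℤ × ℤ) : 𝒜 := Finsupp.single v 1

/-- The multiplication of `𝒜` on the basis: `e_v * e_w = A^(-(D v w)) • e_(v+w)`. -/
lemma e_mul_e (v w : ℤ × ℤ) : e v * e w = (T (-(D v w)) : R) • e (v + w) := by
  show mulF (Finsupp.single v 1) (Finsupp.single w 1) =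
    T (-(D v w)) • (Finsupp.single (v + w) (1 : R))
  rw [mulF_single_single, one_mul, one_mul]
  exact (Finsupp.smul_single_one (v + w) (T (-(D v w)) : R)).symm

lemma one_def : (1 : 𝒜) = e (0, 0) := rfl

lemma D_neg_left (v w : ℤ × ℤ) : D (-v) w = -D v w := by
  simp only [D, Prod.fst_neg, Prod.snd_neg]; ring

lemma D_neg_right (v w : ℤ × ℤ) : D v (-w) = -D v w := by
  simp only [D, Prod.fst_neg, Prod.snd_neg]; ring

/-- Product-to-sum formula for the symmetrized elements of `𝒜`:
`(e v + e (-v)) * (e w + e (-w))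
  = A^(D v w) • (e (v-w) + e (-(v-w))) + A^(-(D v w)) • (e (v+w) + e (-(v+w)))`. -/
theorem symm_product_to_sum (v w : ℤ × ℤ) :
    (e v + e (-v)) * (e w + e (-w)) =
      (T (D v w) : R) • (e (v - w) + e (-(v - w))) +
        (T (-(D v w)) : R) • (e (v + w) + e (-(v + w))) := by
  rw [add_mul, mul_add, mul_add, e_mul_e, e_mul_e, e_mul_e, e_mul_e, D_neg_left, D_neg_right,
    D_neg_left, D_neg_right, neg_neg, ← sub_eq_add_neg, neg_add_eq_sub, ← neg_add, neg_sub]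
  module

end
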